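/- arXiv:2002.08632 — 3 statements merged into one kernel-verified Lean document; each statement's English description precedes it below -/
import Mathlib

section
/- For the sequence defined by g_0^{(k)} = μ_{k+1} − μ_k, g_1^{(k)} = g_0^{(k)} − g_0^{(k+1)} + g_0^{(1)} μ_{k+1}, and for t ≥ 2, g_t^{(k)} = g_{t−1}^{(k)} − g_{t−1}^{(k+1)} + Σ_{τ=1}^{t−1} g_{t−τ−1}^{(1)} (g_τ^{(k)} − g_{τ−1}^{(k)}) + g_{t−1}^{(1)} μ_{k+1}, the formal generating function G_k(y) = Σ_{t≥0} g_t^{(k)} y^t satisfies the closed-form relation G_k(y) · (1−y)·(1 − y·G_1(y)) = μ_k · y·G_1(y) − y·G_{k+1}(y) + g_0^{(k)}. -/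
open PowerSeries

theorem stmt_0 (μ : ℕ → ℝ) (g : ℕ → ℕ → ℝ)
    (h0 : ∀ k, g 0 k = μ (k + 1) - μ k)
    (h1 : ∀ k, g 1 k = g 0 k - g 0 (k + 1) + g 0 1 * μ (k + 1))
    (ht : ∀ t, 2 ≤ t → ∀ k, g t k =
      g (t - 1) k - g (t - 1) (k + 1)
      + (∑ τ ∈ Finset.Icc 1 (t - 1), g (t - τ - 1) 1 * (g τ k - g (τ - 1) k))
      + g (t - 1) 1 * μ (k + 1))
    (k : ℕ) :
    (PowerSeries.mk (fun t => g t k)) *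
      ((1 - PowerSeries.X) * (1 - PowerSeries.X * PowerSeries.mk (fun t => g t 1))) =
      (PowerSeries.C (R := ℝ) (μ k)) * (PowerSeries.X * PowerSeries.mk (fun t => g t 1))
      - PowerSeries.X * PowerSeries.mk (fun t => g t (k + 1))
      + PowerSeries.C (R := ℝ) (g 0 k) := by
  have key : (PowerSeries.mk (fun t => g t k)) *
      ((1 - PowerSeries.X) * (1 - PowerSeries.X * PowerSeries.mk (fun t => g t 1))) =
      PowerSeries.mk (fun t => g t k) - X * PowerSeries.mk (fun t => g t k)
      - X * (PowerSeries.mk (fun t => g t k) * PowerSeries.mk (fun t => g t 1))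
      + X * (X * (PowerSeries.mk (fun t => g t k) * PowerSeries.mk (fun t => g t 1))) := by
    ring
  rw [key]
  ext n
  have hS : ∀ m : ℕ,
      (coeff m) (PowerSeries.mk (fun t => g t k) * PowerSeries.mk (fun t => g t 1)) =
      ∑ i ∈ Finset.range (m + 1), g i k * g (m - i) 1 := by
    intro m
    rw [PowerSeries.coeff_mul, Finset.Nat.sum_antidiagonal_eq_sum_range_succ_mk]
    simp [coeff_mk]
  match n with
  | 0 => simp
  | 1 =>
    simp only [map_add, map_sub, coeff_succ_X_mul, coeff_zero_X_mul, hS,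
      PowerSeries.coeff_C_mul, coeff_C, coeff_mk, Finset.sum_range_one]
    norm_num
    rw [h1 k, h0 k]
    ring
  | (n + 2) =>
    simp only [map_add, map_sub, coeff_succ_X_mul, hS,
      PowerSeries.coeff_C_mul, coeff_C, coeff_mk]
    rw [ht (n + 2) (by omega) k]
    have hIcc : ∑ τ ∈ Finset.Icc 1 (n + 2 - 1), g (n + 2 - τ - 1) 1 * (g τ k - g (τ - 1) k)
        = ∑ j ∈ Finset.range (n + 1), g (n - j) 1 * (g (j + 1) k - g j k) := by
      rw [show n + 2 - 1 = n + 1 from rfl, ← Finset.Ico_add_one_right_eq_Icc,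
        Finset.sum_Ico_eq_sum_range]
      apply Finset.sum_congr (by norm_num)
      intro j hj
      simp only [Finset.mem_range] at hj
      rw [show 1 + j = j + 1 from by omega, show n + 2 - (j + 1) - 1 = n - j from by omega,
        Nat.add_sub_cancel]
    rw [hIcc]
    have hT : ∑ j ∈ Finset.range (n + 1), g (n - j) 1 * (g (j + 1) k - g j k)
        = (∑ i ∈ Finset.range (n + 1 + 1), g i k * g (n + 1 - i) 1)
          - (∑ i ∈ Finset.range (n + 1), g i k * g (n - i) 1)
          - g 0 k * g (n + 1) 1 := by
      rw [Finset.sum_range_succ' (fun i => g i k * g (n + 1 - i) 1) (n + 1)]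
      have e1 : ∀ j ∈ Finset.range (n + 1),
          g (j + 1) k * g (n + 1 - (j + 1)) 1 = g (j + 1) k * g (n - j) 1 := by
        intro j hj; congr 2; omega
      rw [Finset.sum_congr rfl e1]
      have e2 : ∀ j ∈ Finset.range (n + 1),
          g (n - j) 1 * (g (j + 1) k - g j k)
          = g (j + 1) k * g (n - j) 1 - g j k * g (n - j) 1 := by
        intro j _; ring
      rw [Finset.sum_congr rfl e2, Finset.sum_sub_distrib]
      simp only [Nat.sub_zero]
      ring
    rw [hT, h0 k]
    norm_num
    ring
end

section
/- Let C ≠ 0 and define g_t by the recursion g_0 = C/2 − 1, g_t = Σ_{τ=0}^{t−1} h_{t−τ} g_τ − h_{t+1} with h_t = C^{t−1}/t! − C^t/(t+1)!. Then the generating function Σ_{t≥0} g_t y^t equals 1/y + C/((1−y)(1 − e^{Cy})) as analytic functions on a punctured neighborhood of 0 (the right-hand side extends analytically to y = 0). -/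
open Finset

set_option maxHeartbeats 2000000 in
private theorem stmt_10_aux (C : ℝ) (hC : C ≠ 0) (h : ℕ → ℝ) (h0 : h 0 = 0)
    (hh : ∀ t, 1 ≤ t → h t = C ^ (t - 1) / (Nat.factorial t : ℝ)
      - C ^ t / (Nat.factorial (t + 1) : ℝ))
    (g : ℕ → ℝ) (hg0 : g 0 = C / 2 - 1)
    (hg : ∀ t, 1 ≤ t → g t = (∑ τ ∈ Finset.range t, h (t - τ) * g τ) - h (t + 1)) :
    ∃ ε > 0, ∀ y : ℝ, y ≠ 0 → |y| < ε →
      HasSum (fun t : ℕ => g t * y ^ t)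
        (1 / y + C / ((1 - y) * (1 - Real.exp (C * y)))) := by
  set D : ℝ := |C| + 1 with hDdef
  have hD1 : 1 ≤ D := by
    have := abs_nonneg C; simp only [hDdef]; linarith
  have hD0 : 0 ≤ D := by linarith
  have habsC : |C| ≤ D := by simp only [hDdef]; linarith
  set K : ℝ := 4 * Real.exp D with hKdef
  have hexpD1 : 1 ≤ Real.exp D := by
    have := Real.add_one_le_exp D; linarith
  have hK4 : 4 ≤ K := by simp only [hKdef]; nlinarith
  have hK1 : (1:ℝ) ≤ K := by linarith
  have hK0 : (0:ℝ) < K := by linarith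
  have hDK : D ≤ K := by
    have := Real.add_one_le_exp D
    simp only [hKdef]; nlinarith
  -- bound on h
  have hhb : ∀ t : ℕ, |h t| ≤ 2 * D ^ t / (Nat.factorial t : ℝ) := by
    intro t
    match t with
    | 0 => simp only [h0, abs_zero]; positivity
    | (n+1) =>
      rw [hh (n+1) (by omega)]
      have hfac1 : (0:ℝ) < (Nat.factorial (n+1) : ℝ) := by
        exact_mod_cast Nat.factorial_pos _
      have hfac2 : (0:ℝ) < (Nat.factorial (n+2) : ℝ) := by
        exact_mod_cast Nat.factorial_pos _
      have hfacle : (Nat.factorial (n+1) : ℝ) ≤ (Nat.factorial (n+2) : ℝ) := by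
        exact_mod_cast Nat.factorial_le (by omega)
      have h1 : |C| ^ n ≤ D ^ (n+1) := by
        calc |C| ^ n ≤ D ^ n := pow_le_pow_left₀ (abs_nonneg C) habsC n
          _ ≤ D ^ (n+1) := pow_le_pow_right₀ hD1 (by omega)
      have h2 : |C| ^ (n+1) ≤ D ^ (n+1) := pow_le_pow_left₀ (abs_nonneg C) habsC _
      calc |C ^ (n + 1 - 1) / (Nat.factorial (n+1) : ℝ) - C ^ (n+1) / (Nat.factorial (n+1+1) : ℝ)|
          ≤ |C ^ (n + 1 - 1) / (Nat.factorial (n+1) : ℝ)| + |C ^ (n+1) / (Nat.factorial (n+1+1) : ℝ)| :=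
            abs_sub _ _
        _ = |C| ^ n / (Nat.factorial (n+1) : ℝ) + |C| ^ (n+1) / (Nat.factorial (n+2) : ℝ) := by
            rw [abs_div, abs_div, abs_pow, abs_pow]
            norm_num [abs_of_nonneg (le_of_lt hfac1), abs_of_nonneg (le_of_lt hfac2)]
        _ ≤ D ^ (n+1) / (Nat.factorial (n+1) : ℝ) + D ^ (n+1) / (Nat.factorial (n+1) : ℝ) := by
            gcongr
        _ = 2 * D ^ (n+1) / (Nat.factorial (n+1) : ℝ) := by ring
  have hterm : ∀ m : ℕ, D ^ m / (Nat.factorial m : ℝ) ≤ Real.exp D := by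
    intro m
    have h1 : D ^ m / (Nat.factorial m : ℝ) ≤ ∑ i ∈ range (m+1), D ^ i / (Nat.factorial i : ℝ) := by
      refine Finset.single_le_sum (f := fun i => D ^ i / (Nat.factorial i : ℝ)) ?_ ?_
      · intro i _; positivity
      · simp
    exact h1.trans (Real.sum_le_exp_of_nonneg hD0 _)
  have hsumh : ∀ t : ℕ, ∑ τ ∈ range t, |h (t - τ)| ≤ 2 * Real.exp D := by
    intro t
    have e1 : ∑ τ ∈ range t, |h (t - τ)| = ∑ j ∈ range t, |h (j + 1)| := by
      rw [← Finset.sum_range_reflect (fun j => |h (j + 1)|) t]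
      refine Finset.sum_congr rfl fun j hj => ?_
      simp only [Finset.mem_range] at hj
      have ej : t - 1 - j + 1 = t - j := by omega
      rw [ej]
    rw [e1]
    calc ∑ j ∈ range t, |h (j + 1)|
        ≤ ∑ j ∈ range t, 2 * D ^ (j+1) / (Nat.factorial (j+1) : ℝ) :=
          Finset.sum_le_sum fun j _ => hhb (j+1)
      _ ≤ ∑ i ∈ range (t+1), 2 * D ^ i / (Nat.factorial i : ℝ) := by
          rw [Finset.sum_range_succ']
          have h00 : (0:ℝ) ≤ 2 * D ^ 0 / (Nat.factorial 0 : ℝ) := by positivity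
          linarith
      _ = 2 * ∑ i ∈ range (t+1), D ^ i / (Nat.factorial i : ℝ) := by
          rw [Finset.mul_sum]; exact Finset.sum_congr rfl fun i _ => by ring
      _ ≤ 2 * Real.exp D := by
          have := Real.sum_le_exp_of_nonneg hD0 (t+1); linarith
  -- bound on g
  have hgb : ∀ t : ℕ, |g t| ≤ K ^ (t + 1) := by
    intro t
    induction t using Nat.strong_induction_on with
    | _ t ih =>
      match t with
      | 0 =>
        rw [hg0, pow_one]
        have : |C / 2 - 1| ≤ |C| / 2 + 1 := by
          calc |C / 2 - 1| ≤ |C / 2| + |1| := abs_sub _ _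
            _ = |C| / 2 + 1 := by rw [abs_div]; norm_num
        have hKC : |C| / 2 + 1 ≤ K := by
          have := Real.add_one_le_exp D
          simp only [hKdef, hDdef] at *
          nlinarith [abs_nonneg C]
        linarith
      | (n+1) =>
        rw [hg (n+1) (by omega)]
        have hb1 : |∑ τ ∈ range (n+1), h (n+1-τ) * g τ - h (n+1+1)| ≤
            (∑ τ ∈ range (n+1), |h (n+1-τ)| * |g τ|) + |h (n+2)| := by
          refine (abs_sub _ _).trans ?_
          gcongr
          refine (Finset.abs_sum_le_sum_abs _ _).trans ?_
          exact Finset.sum_le_sum fun τ _ => le_of_eq (abs_mul _ _)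
        have hb2 : ∑ τ ∈ range (n+1), |h (n+1-τ)| * |g τ| ≤
            (∑ τ ∈ range (n+1), |h (n+1-τ)|) * K ^ (n+1) := by
          rw [Finset.sum_mul]
          refine Finset.sum_le_sum fun τ hτ => ?_
          simp only [Finset.mem_range] at hτ
          have hgτ : |g τ| ≤ K ^ (τ+1) := ih τ (by omega)
          have : K ^ (τ+1) ≤ K ^ (n+1) := pow_le_pow_right₀ hK1 (by omega)
          have h0h : (0:ℝ) ≤ |h (n+1-τ)| := abs_nonneg _
          nlinarith [abs_nonneg (g τ)]
        have hb3 : (∑ τ ∈ range (n+1), |h (n+1-τ)|) * K ^ (n+1) ≤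
            (2 * Real.exp D) * K ^ (n+1) := by
          have := hsumh (n+1)
          have hKp : (0:ℝ) ≤ K ^ (n+1) := by positivity
          nlinarith
        have hb4 : |h (n+2)| ≤ (2 * Real.exp D) * K ^ (n+1) := by
          have h1 : |h (n+2)| ≤ 2 * Real.exp D := by
            refine (hhb (n+2)).trans ?_
            have := hterm (n+2)
            rw [mul_div_assoc]
            linarith
          have hKp : (1:ℝ) ≤ K ^ (n+1) := one_le_pow₀ hK1
          nlinarith [Real.exp_pos D]
        have hfin : (2 * Real.exp D) * K ^ (n+1) + (2 * Real.exp D) * K ^ (n+1)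
            = K ^ (n+1+1) := by
          rw [pow_succ, hKdef]; ring
        calc |∑ τ ∈ range (n+1), h (n+1-τ) * g τ - h (n+1+1)|
            ≤ (∑ τ ∈ range (n+1), |h (n+1-τ)| * |g τ|) + |h (n+2)| := hb1
          _ ≤ (2 * Real.exp D) * K ^ (n+1) + (2 * Real.exp D) * K ^ (n+1) := by
              linarith [hb2.trans hb3]
          _ = K ^ (n+1+1) := hfin
  refine ⟨1 / (2 * K), by positivity, fun y hy hylt => ?_⟩
  have hy2 : K * |y| < 1 / 2 := by
    calc K * |y| < K * (1 / (2 * K)) := by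
          exact mul_lt_mul_of_pos_left hylt hK0
      _ = 1 / 2 := by field_simp
  set r : ℝ := K * |y| with hrdef
  have hr0 : (0:ℝ) ≤ r := by positivity
  have hr1 : r < 1 := by linarith
  have hyabs1 : |y| < 1 := by
    have : |y| ≤ K * |y| := le_mul_of_one_le_left (abs_nonneg y) hK1
    linarith
  have h1y : (1:ℝ) - y ≠ 0 := by
    have hy' := abs_lt.mp hyabs1
    intro hcon
    have : y = 1 := by linarith
    linarith [hy'.2]
  have hx : C * y ≠ 0 := mul_ne_zero hC hy
  set E := Real.exp (C * y) with hEdef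
  have hE1 : E - 1 ≠ 0 := by
    rw [sub_ne_zero, hEdef]
    simpa using (Real.exp_injective.ne_iff' Real.exp_zero).mpr hx
  have hexp : HasSum (fun n : ℕ => (C * y) ^ n / (Nat.factorial n : ℝ)) E := by
    rw [hEdef, Real.exp_eq_exp_ℝ]
    exact NormedSpace.expSeries_div_hasSum_exp (C * y)
  have p : HasSum (fun n : ℕ => (C * y) ^ n / (Nat.factorial n : ℝ) * (1 / C)
      - (if n = 0 then (1 / C : ℝ) else 0)) (E * (1 / C) - 1 / C) := by
    have := (hexp.mul_right (1 / C)).sub (hasSum_ite_eq 0 (1 / C : ℝ))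
    simpa using this
  have hshift : HasSum (fun n : ℕ => (C * y) ^ (n + 1) / (Nat.factorial (n + 1) : ℝ)) (E - 1) := by
    refine (hasSum_nat_add_iff (f := fun n : ℕ => (C * y) ^ n / (Nat.factorial n : ℝ)) 1).mpr ?_
    simpa using hexp
  have q : HasSum (fun n : ℕ => (C * y) ^ (n + 1) / (Nat.factorial (n + 1) : ℝ) * (C * y)⁻¹
      - (if n = 0 then (1 : ℝ) else 0)) ((E - 1) * (C * y)⁻¹ - 1) := by
    have := (hshift.mul_right ((C * y)⁻¹)).sub (hasSum_ite_eq 0 (1 : ℝ))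
    simpa using this
  set HH : ℝ := (E * (1 / C) - 1 / C) - ((E - 1) * (C * y)⁻¹ - 1) with hHHdef
  have hfun : (fun t : ℕ => h t * y ^ t) = fun n : ℕ =>
      ((C * y) ^ n / (Nat.factorial n : ℝ) * (1 / C) - (if n = 0 then (1 / C : ℝ) else 0)) -
      ((C * y) ^ (n + 1) / (Nat.factorial (n + 1) : ℝ) * (C * y)⁻¹ - (if n = 0 then (1 : ℝ) else 0)) := by
    funext n
    match n with
    | 0 =>
      simp [h0, Nat.factorial]
      field_simp
      ring
    | (m+1) =>
      rw [hh (m+1) (by omega)]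
      simp only [Nat.add_sub_cancel, if_neg (Nat.succ_ne_zero m)]
      have f1 : ((Nat.factorial (m+1)) : ℝ) ≠ 0 := by exact_mod_cast (Nat.factorial_pos _).ne'
      have f2 : ((Nat.factorial (m+1+1)) : ℝ) ≠ 0 := by exact_mod_cast (Nat.factorial_pos _).ne'
      field_simp
      ring
  have hH : HasSum (fun t : ℕ => h t * y ^ t) HH := by
    rw [hfun, hHHdef]; exact p.sub q
  have Sh : Summable (fun t : ℕ => ‖h t * y ^ t‖) := by
    refine Summable.of_nonneg_of_le (fun t => norm_nonneg _) (fun t => ?_)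
      ((summable_geometric_of_lt_one hr0 hr1).mul_left 2)
    have h1 : |h t| ≤ 2 * K ^ t := by
      have hb := hhb t
      have hf1 : (1:ℝ) ≤ (Nat.factorial t : ℝ) := by
        exact_mod_cast Nat.one_le_iff_ne_zero.mpr (Nat.factorial_ne_zero t)
      have h2 : 2 * D ^ t / (Nat.factorial t : ℝ) ≤ 2 * D ^ t :=
        div_le_self (by positivity) hf1
      have h3 : D ^ t ≤ K ^ t := pow_le_pow_left₀ hD0 hDK t
      linarith
    calc ‖h t * y ^ t‖ = |h t| * |y| ^ t := by
          rw [Real.norm_eq_abs, abs_mul, abs_pow]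
      _ ≤ (2 * K ^ t) * |y| ^ t :=
          mul_le_mul_of_nonneg_right h1 (by positivity)
      _ = 2 * r ^ t := by rw [hrdef, mul_pow]; ring
  have Sg : Summable (fun t : ℕ => ‖g t * y ^ t‖) := by
    refine Summable.of_nonneg_of_le (fun t => norm_nonneg _) (fun t => ?_)
      ((summable_geometric_of_lt_one hr0 hr1).mul_left K)
    calc ‖g t * y ^ t‖ = |g t| * |y| ^ t := by
          rw [Real.norm_eq_abs, abs_mul, abs_pow]
      _ ≤ K ^ (t + 1) * |y| ^ t :=
          mul_le_mul_of_nonneg_right (hgb t) (by positivity)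
      _ = K * r ^ t := by rw [hrdef, mul_pow, pow_succ]; ring
  have hSsum : Summable (fun t : ℕ => g t * y ^ t) := Sg.of_norm
  set S : ℝ := ∑' t, g t * y ^ t with hSdef
  have hS : HasSum (fun t : ℕ => g t * y ^ t) S := hSsum.hasSum
  have cauchy : HasSum (fun n : ℕ => ∑ k ∈ range (n + 1),
      (h k * y ^ k) * (g (n - k) * y ^ (n - k))) (HH * S) := by
    have hc := hasSum_sum_range_mul_of_summable_norm Sh Sg
    rwa [hH.tsum_eq, ← hSdef] at hc
  have hH1 : HasSum (fun t : ℕ => h (t + 1) * y ^ (t + 1)) HH := by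
    refine (hasSum_nat_add_iff (f := fun t : ℕ => h t * y ^ t) 1).mpr ?_
    simpa [h0] using hH
  have hH2 : HasSum (fun t : ℕ => h (t + 1) * y ^ t) (HH * y⁻¹) := by
    have h2 := hH1.mul_right y⁻¹
    have e : (fun t : ℕ => h (t + 1) * y ^ (t + 1) * y⁻¹) = fun t : ℕ => h (t + 1) * y ^ t := by
      funext t
      rw [pow_succ]
      field_simp
    rwa [e] at h2
  have hrec : ∀ t : ℕ, g t * y ^ t =
      (∑ k ∈ range (t + 1), (h k * y ^ k) * (g (t - k) * y ^ (t - k))) - h (t + 1) * y ^ t := by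
    intro t
    have e1 : ∑ k ∈ range (t + 1), (h k * y ^ k) * (g (t - k) * y ^ (t - k))
        = (∑ k ∈ range (t + 1), h k * g (t - k)) * y ^ t := by
      rw [Finset.sum_mul]
      refine Finset.sum_congr rfl fun k hk => ?_
      simp only [Finset.mem_range] at hk
      have hyk : y ^ k * y ^ (t - k) = y ^ t := by
        rw [← pow_add]; congr 1; omega
      calc (h k * y ^ k) * (g (t - k) * y ^ (t - k))
          = h k * g (t - k) * (y ^ k * y ^ (t - k)) := by ring
        _ = h k * g (t - k) * y ^ t := by rw [hyk]
    have e2 : ∑ k ∈ range (t + 1), h k * g (t - k) = ∑ τ ∈ range (t + 1), h (t - τ) * g τ := by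
      rw [← Finset.sum_range_reflect (fun k => h k * g (t - k)) (t + 1)]
      refine Finset.sum_congr rfl fun j hj => ?_
      simp only [Finset.mem_range] at hj
      have ea : t + 1 - 1 - j = t - j := by omega
      have eb : t - (t - j) = j := by omega
      rw [ea, eb]
    have e3 : ∑ τ ∈ range (t + 1), h (t - τ) * g τ = ∑ τ ∈ range t, h (t - τ) * g τ := by
      rw [Finset.sum_range_succ]
      simp [h0]
    rw [e1, e2, e3]
    match t with
    | 0 =>
      simp only [Finset.range_zero, Finset.sum_empty, pow_zero, mul_one, zero_mul, zero_sub]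
      rw [hg0, hh 1 le_rfl]
      norm_num [Nat.factorial]
    | (n+1) =>
      rw [hg (n+1) (by omega)]
      ring
  have hS2 : HasSum (fun t : ℕ => g t * y ^ t) (HH * S - HH * y⁻¹) := by
    have hsub := cauchy.sub hH2
    have e : (fun n : ℕ => (∑ k ∈ range (n + 1), (h k * y ^ k) * (g (n - k) * y ^ (n - k)))
        - h (n + 1) * y ^ n) = fun t : ℕ => g t * y ^ t := by
      funext t
      rw [← hrec t]
    rwa [e] at hsub
  have huniq : S = HH * S - HH * y⁻¹ := hS.unique hS2
  clear_value D K r E HH S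
  have hW : (1:ℝ) - HH = (E - 1) * (1 - y) / (C * y) := by
    rw [hHHdef]
    field_simp
    ring
  have hWne : (1:ℝ) - HH ≠ 0 := by
    rw [hW]
    exact div_ne_zero (mul_ne_zero hE1 h1y) hx
  have hlin : S * (1 - HH) = -(HH * y⁻¹) := by linear_combination huniq
  have hSeq : S = -(HH * y⁻¹) / (1 - HH) := (eq_div_iff hWne).mpr hlin
  have h1E : (1:ℝ) - E ≠ 0 := by
    intro hc; apply hE1; linarith
  have hWne' : (E - 1) * (1 - y) / (C * y) ≠ 0 := hW ▸ hWne
  have hSval : S = 1 / y + C / ((1 - y) * (1 - E)) := by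
    rw [hSeq, hW, hHHdef]
    rw [div_eq_iff hWne', eq_comm]
    field_simp
    ring
  rw [hSval] at hS
  exact hS

theorem stmt_10 (C : ℝ) (hC : C ≠ 0) (h : ℕ → ℝ) (h0 : h 0 = 0)
    (hh : ∀ t, 1 ≤ t → h t = C ^ (t - 1) / (Nat.factorial t : ℝ)
      - C ^ t / (Nat.factorial (t + 1) : ℝ))
    (g : ℕ → ℝ) (hg0 : g 0 = C / 2 - 1)
    (hg : ∀ t, 1 ≤ t → g t = (∑ τ ∈ Finset.range t, h (t - τ) * g τ) - h (t + 1)) :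
    ∃ ε > 0, ∀ y : ℝ, y ≠ 0 → |y| < ε →
      HasSum (fun t : ℕ => g t * y ^ t)
        (1 / y + C / ((1 - y) * (1 - Real.exp (C * y)))) :=
  stmt_10_aux C hC h h0 hh g hg0 hg
end

section
/- Suppose μ_0 = μ_1 = 1 in the recursion defining g_t^{(k)}. Then g_t^{(0)} = 0 for all t ≥ 0. -/
theorem stmt_12 (μ : ℕ → ℝ) (hμ0 : μ 0 = 1) (hμ1 : μ 1 = 1)
    (g : ℕ → ℕ → ℝ)
    (h0 : ∀ k, g 0 k = μ (k + 1) - μ k)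
    (h1 : ∀ k, g 1 k = g 0 k - g 0 (k + 1) + g 0 1 * μ (k + 1))
    (ht : ∀ t, 2 ≤ t → ∀ k, g t k =
      g (t - 1) k - g (t - 1) (k + 1)
      + (∑ τ ∈ Finset.Icc 1 (t - 1), g (t - τ - 1) 1 * (g τ k - g (τ - 1) k))
      + g (t - 1) 1 * μ (k + 1)) :
    ∀ t, g t 0 = 0 := by
  intro t
  induction t using Nat.strong_induction_on with
  | _ t ih =>
    match t with
    | 0 => simp [h0, hμ0, hμ1]
    | 1 => rw [h1]; simp only [h0]; simp [hμ0, hμ1]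
    | (n+2) =>
      rw [ht (n+2) (by omega) 0]
      have hsum : (∑ τ ∈ Finset.Icc 1 (n+2-1), g (n+2-τ-1) 1 * (g τ 0 - g (τ-1) 0)) = 0 := by
        apply Finset.sum_eq_zero
        intro τ hτ
        simp only [Finset.mem_Icc] at hτ
        rw [ih τ (by omega), ih (τ-1) (by omega)]
        ring
      rw [hsum, ih (n+2-1) (by omega)]
      simp [hμ1]
end
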